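/- arXiv:2206.14112 — 3 statements merged into one kernel-verified Lean document; each statement's English description precedes it below -/
import Mathlib

section
/- Let (ω,Σ) be a weight system on a finite player set N and let G=(N,E) be a graph preserving (ω,Σ)-convexity. Then for every priority level k, every connected component of the subgraph G_k of G induced by the set of players of priority k is a complete graph or a star. -/
/-!
Suppose `a – b – c` is an induced path inside one priority level and `a` has a second neighbour
`d ≠ b` in that level. The game
`v X = [a ∈ X] * ([c ∈ X] * ω d + [d ∈ X] * ω c + [c ∈ X ∨ d ∈ X] * ω a)`
is `(ω,Σ)`-convex because `a`, `c`, `d` share a priority. In `v^G` only the component of `a`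
counts, and for `S = {a, b, c}`, `T = S ∪ {d}` the convexity sum is
`ω a * ω c + ω b * (ω c - v^G (T \ {b})) - ω c * ω a ≤ -ω a * ω b < 0`,
since `T \ {b}` still connects `a` to `d`. Hence within a level the ends of induced 2-paths are
pendant, and a connected graph with this property is complete or a star centred at the middle
vertex of any induced 2-path.
-/

open Finset

variable {α : Type*}

noncomputable section

open scoped Classical

/-- `ω̄^S_i`: the weight of `i` if `i` belongs to the top-priority part `S̄` of `S`, else `0`.
Here the ordered partition `Σ` is encoded by the priority function `p`. -/
def wbar [DecidableEq α] (ω : α → ℝ) (p : α → ℕ) (S : Finset α) (i : α) : ℝ :=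
  if i ∈ S ∧ p i = S.sup p then ω i else 0

/-- `(ω,Σ)`-convexity of a TU-game `v`. -/
def WConvex [DecidableEq α] (ω : α → ℝ) (p : α → ℕ) (v : Finset α → ℝ) : Prop :=
  ∀ S T : Finset α, S ⊂ T →
    0 ≤ ∑ i ∈ S, wbar ω p T i * (v T - v (T.erase i) - v S + v (S.erase i))

/-- The connected component of `i` in the subgraph of `G` induced by `S`. -/
def compOf [Fintype α] (G : SimpleGraph α) (S : Finset α) (i : α) : Finset α :=
  S.filter fun j => Relation.ReflTransGen (fun a b => a ∈ S ∧ b ∈ S ∧ G.Adj a b) i j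

/-- The communication game `v^G`: `v^G(S)` is the sum of `v` over the (vertex sets of the)
connected components of the subgraph of `G` induced by `S`. -/
def commGame [Fintype α] [DecidableEq α] (G : SimpleGraph α)
    (v : Finset α → ℝ) (S : Finset α) : ℝ :=
  ∑ A ∈ S.image (compOf G S), v A

/-- `G` preserves `(ω,Σ)`-convexity. -/
def Preserves [Fintype α] [DecidableEq α] (G : SimpleGraph α)
    (ω : α → ℝ) (p : α → ℕ) : Prop :=
  ∀ v : Finset α → ℝ, v ∅ = 0 → WConvex ω p v → WConvex ω p (commGame G v)

/-- The set of players of priority `k`. -/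
def level [Fintype α] (p : α → ℕ) (k : ℕ) : Finset α :=
  Finset.univ.filter fun i => p i = k

/-- The vertex set `C` induces a complete subgraph of `G`. -/
def IsCompleteOn (G : SimpleGraph α) (C : Finset α) : Prop :=
  ∀ x ∈ C, ∀ y ∈ C, x ≠ y → G.Adj x y

/-- The subgraph of `G` induced by `C` is a star with center `c`: within `C`, `c` is adjacent
to all other vertices and there are no other edges. -/
def IsStarOnCenter (G : SimpleGraph α) (C : Finset α) (c : α) : Prop :=
  ∀ x ∈ C, ∀ y ∈ C, (G.Adj x y ↔ x ≠ y ∧ (x = c ∨ y = c))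

/-- The subgraph of `G` induced by `C` is a star. -/
def IsStarOn (G : SimpleGraph α) (C : Finset α) : Prop :=
  ∃ c ∈ C, IsStarOnCenter G C c

/-- `A` and `B` are linked: some edge of `G` joins a vertex of `A` to a vertex of `B`. -/
def Linked (G : SimpleGraph α) (A B : Finset α) : Prop :=
  ∃ a ∈ A, ∃ b ∈ B, G.Adj a b

abbrev AdjWithin (G : SimpleGraph α) (S : Finset α) (x y : α) : Prop :=
  x ∈ S ∧ y ∈ S ∧ G.Adj x y

lemma reflTransGen_adjWithin_symm {G : SimpleGraph α} {S : Finset α} {x y : α}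
    (h : Relation.ReflTransGen (AdjWithin G S) x y) :
    Relation.ReflTransGen (AdjWithin G S) y x := by
  induction h with
  | refl => rfl
  | tail _ hxy ih => exact ih.head ⟨hxy.2.1, hxy.1, hxy.2.2.symm⟩

section Components

variable [Fintype α] {G : SimpleGraph α} {S : Finset α} {i j x y : α}

lemma mem_compOf : j ∈ compOf G S i ↔ j ∈ S ∧ Relation.ReflTransGen (AdjWithin G S) i j :=
  mem_filter

lemma compOf_subset : compOf G S i ⊆ S :=
  filter_subset _ _

lemma self_mem_compOf (hi : i ∈ S) : i ∈ compOf G S i :=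
  mem_compOf.2 ⟨hi, .refl⟩

lemma mem_compOf_of_adj (hx : x ∈ compOf G S i) (hy : y ∈ S) (hxy : G.Adj x y) :
    y ∈ compOf G S i :=
  mem_compOf.2 ⟨hy, (mem_compOf.1 hx).2.tail ⟨compOf_subset hx, hy, hxy⟩⟩

lemma compOf_eq_of_mem (hj : j ∈ compOf G S i) : compOf G S j = compOf G S i := by
  have hij := (mem_compOf.1 hj).2
  ext x
  simp only [mem_compOf]
  exact and_congr_right fun _ => ⟨hij.trans, (reflTransGen_adjWithin_symm hij).trans⟩

lemma compOf_eq_singleton (hi : i ∈ S) (hiso : ∀ j ∈ S, ¬ G.Adj i j) : compOf G S i = {i} := by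
  refine subset_antisymm (fun j hj => ?_) (singleton_subset_iff.2 (self_mem_compOf hi))
  rw [mem_singleton]
  obtain ⟨-, hij⟩ := mem_compOf.1 hj
  clear hj
  induction hij with
  | refl => rfl
  | tail _ hyz ih =>
    subst ih
    exact absurd hyz.2.2 (hiso _ hyz.2.1)

end Components

section CommGame

variable [Fintype α] [DecidableEq α] {G : SimpleGraph α} {v : Finset α → ℝ} {S : Finset α} {a : α}

lemma commGame_eq_zero_of_notMem (hv : ∀ X, a ∉ X → v X = 0) (ha : a ∉ S) :
    commGame G v S = 0 :=
  sum_eq_zero fun _ hB => by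
    obtain ⟨j, -, rfl⟩ := mem_image.1 hB
    exact hv _ fun h => ha (compOf_subset h)

lemma commGame_eq_compOf_of_mem (hv : ∀ X, a ∉ X → v X = 0) (ha : a ∈ S) :
    commGame G v S = v (compOf G S a) := by
  refine sum_eq_single_of_mem _ (mem_image_of_mem _ ha) fun B hB hne => hv _ fun haB => hne ?_
  obtain ⟨j, -, rfl⟩ := mem_image.1 hB
  exact (compOf_eq_of_mem haB).symm

end CommGame

def obstructionGame [DecidableEq α] (ω : α → ℝ) (a c d : α) (X : Finset α) : ℝ :=
  if a ∈ X then
    (if c ∈ X then ω d else 0) + (if d ∈ X then ω c else 0) + (if c ∈ X ∨ d ∈ X then ω a else 0)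
  else 0

section ObstructionGame

variable [DecidableEq α] {ω : α → ℝ} {p : α → ℕ} {a c d : α}

lemma obstructionGame_empty : obstructionGame ω a c d ∅ = 0 := by
  simp [obstructionGame]

lemma obstructionGame_erase (X : Finset α) {i : α} (hi : i ∉ ({a, c, d} : Finset α)) :
    obstructionGame ω a c d (X.erase i) = obstructionGame ω a c d X := by
  simp only [mem_insert, mem_singleton, not_or] at hi
  simp only [obstructionGame, mem_erase, Ne.symm hi.1, Ne.symm hi.2.1, Ne.symm hi.2.2, ne_eq,
    not_false_eq_true, true_and]

lemma obstructionGame_wconvex (hω : ∀ i, 0 ≤ ω i) (hac : a ≠ c) (had : a ≠ d) (hcd : c ≠ d)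
    (hpc : p c = p a) (hpd : p d = p a) : WConvex ω p (obstructionGame ω a c d) := by
  intro S T hST
  have hsupp : ∀ i ∈ S, i ∉ ({a, c, d} : Finset α) → wbar ω p T i *
      (obstructionGame ω a c d T - obstructionGame ω a c d (T.erase i) -
        obstructionGame ω a c d S + obstructionGame ω a c d (S.erase i)) = 0 := fun i _ hi => by
    rw [obstructionGame_erase T hi, obstructionGame_erase S hi]
    ring
  rw [← sum_subset inter_subset_left fun i hS hi => hsupp i hS fun h => hi (mem_inter.2 ⟨hS, h⟩),
    inter_comm, ← filter_mem_eq_inter, sum_filter, sum_insert (by simp [hac, had]),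
    sum_insert (by simp [hcd]), sum_singleton]
  simp only [wbar, hpc, hpd]
  by_cases htop : p a = T.sup p
  · have hmem : ∀ x, (x ∈ S ∧ x ∈ T) ∨ (x ∉ S ∧ x ∈ T) ∨ (x ∉ S ∧ x ∉ T) := fun x => by
      have hxST : x ∈ S → x ∈ T := fun h => hST.subset h
      tauto
    rcases hmem a with ⟨haS, haT⟩ | ⟨haS, haT⟩ | ⟨haS, haT⟩ <;>
    rcases hmem c with ⟨hcS, hcT⟩ | ⟨hcS, hcT⟩ | ⟨hcS, hcT⟩ <;>
    rcases hmem d with ⟨hdS, hdT⟩ | ⟨hdS, hdT⟩ | ⟨hdS, hdT⟩ <;>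
    simp [obstructionGame, mem_erase, hac, had, hcd, hcd.symm, htop,
      haS, hcS, hdS, haT, hcT, hdT] <;> nlinarith [hω a, hω c, hω d]
  · simp [htop]

end ObstructionGame

section CommGameObstruction

variable [Fintype α] [DecidableEq α] {G : SimpleGraph α} {ω : α → ℝ} {a c d : α} {X : Finset α}

lemma commGame_obstructionGame_of_notMem (ha : a ∉ X) :
    commGame G (obstructionGame ω a c d) X = 0 :=
  commGame_eq_zero_of_notMem (fun _ hY => if_neg hY) ha

lemma commGame_obstructionGame_of_mem (ha : a ∈ X) :
    commGame G (obstructionGame ω a c d) X =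
      (if c ∈ compOf G X a then ω d else 0) + (if d ∈ compOf G X a then ω c else 0) +
        (if c ∈ compOf G X a ∨ d ∈ compOf G X a then ω a else 0) := by
  rw [commGame_eq_compOf_of_mem (v := obstructionGame ω a c d) (fun _ hY => if_neg hY) ha]
  exact if_pos (self_mem_compOf ha)

lemma commGame_obstructionGame_path {b : α} (hab : G.Adj a b) (hbc : G.Adj b c) (hac : a ≠ c)
    (hnac : ¬ G.Adj a c) (hd : d ∉ ({a, b, c} : Finset α)) :
    commGame G (obstructionGame ω a c d) {a, b, c} = ω a + ω d ∧
      commGame G (obstructionGame ω a c d) (({a, b, c} : Finset α).erase b) = 0 ∧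
      commGame G (obstructionGame ω a c d) (({a, b, c} : Finset α).erase c) = 0 := by
  refine ⟨?_, ?_, ?_⟩
  · have ha : a ∈ ({a, b, c} : Finset α) := by simp
    have hb := mem_compOf_of_adj (self_mem_compOf ha) (by simp) hab
    have hc := mem_compOf_of_adj hb (by simp) hbc
    have hd : d ∉ compOf G {a, b, c} a := fun h => hd (compOf_subset h)
    simp [commGame_obstructionGame_of_mem ha, hc, hd]
    ring
  · have ha : a ∈ ({a, b, c} : Finset α).erase b := by simp [hab.ne]
    have hiso : ∀ j ∈ ({a, b, c} : Finset α).erase b, ¬ G.Adj a j := by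
      simp only [mem_erase, mem_insert, mem_singleton]
      rintro j ⟨hjb, rfl | rfl | rfl⟩
      exacts [G.irrefl, absurd rfl hjb, hnac]
    have had : a ≠ d := fun h => hd (by simp [h])
    simp [commGame_obstructionGame_of_mem ha, compOf_eq_singleton ha hiso, hac.symm, had.symm]
  · have ha : a ∈ ({a, b, c} : Finset α).erase c := by simp [hac]
    have hc : c ∉ compOf G (({a, b, c} : Finset α).erase c) a := fun h => by
      simpa using compOf_subset h
    have hd : d ∉ compOf G (({a, b, c} : Finset α).erase c) a := fun h =>
      hd (mem_of_mem_erase (compOf_subset h))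
    simp [commGame_obstructionGame_of_mem ha, hc, hd]

lemma commGame_obstructionGame_extended_path {b : α} (hωd : 0 ≤ ω d) (hab : G.Adj a b) (hbc : G.Adj b c)
    (had : G.Adj a d) (hac : a ≠ c) (hdb : d ≠ b) (hcd : c ≠ d) :
    commGame G (obstructionGame ω a c d) {a, b, c, d} = ω a + ω c + ω d ∧
      ω a + ω c ≤ commGame G (obstructionGame ω a c d) (({a, b, c, d} : Finset α).erase b) ∧
      commGame G (obstructionGame ω a c d) (({a, b, c, d} : Finset α).erase c) = ω a + ω c := by
  refine ⟨?_, ?_, ?_⟩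
  · have ha : a ∈ ({a, b, c, d} : Finset α) := by simp
    have hb := mem_compOf_of_adj (self_mem_compOf ha) (by simp) hab
    have hc := mem_compOf_of_adj hb (by simp) hbc
    have hd := mem_compOf_of_adj (self_mem_compOf ha) (by simp) had
    simp [commGame_obstructionGame_of_mem ha, hc, hd]
    ring
  · have ha : a ∈ ({a, b, c, d} : Finset α).erase b := by simp [hab.ne]
    have hd := mem_compOf_of_adj (self_mem_compOf ha) (by simp [hdb]) had
    rw [commGame_obstructionGame_of_mem ha, if_pos hd, if_pos (Or.inr hd)]
    split_ifs <;> linarith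
  · have ha : a ∈ ({a, b, c, d} : Finset α).erase c := by simp [hac]
    have hc : c ∉ compOf G (({a, b, c, d} : Finset α).erase c) a := fun h => by
      simpa using compOf_subset h
    have hd := mem_compOf_of_adj (self_mem_compOf ha) (by simp [hcd.symm]) had
    simp [commGame_obstructionGame_of_mem ha, hc, hd]
    ring

end CommGameObstruction

theorem Preserves.eq_of_adj [Fintype α] [DecidableEq α] {ω : α → ℝ} {p : α → ℕ}
    {G : SimpleGraph α} (hpres : Preserves G ω p) (hω : ∀ i, 0 < ω i) {a b c d : α}
    (hac : a ≠ c) (hnac : ¬ G.Adj a c) (hab : G.Adj a b) (hbc : G.Adj b c) (had : G.Adj a d)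
    (hpb : p b = p a) (hpc : p c = p a) (hpd : p d = p a) : d = b := by
  by_contra hdb
  have hcd : c ≠ d := fun h => hnac (h ▸ had)
  have hdS : d ∉ ({a, b, c} : Finset α) := by simp [had.ne.symm, hdb, hcd.symm]
  obtain ⟨hVS, hVSb, hVSc⟩ := commGame_obstructionGame_path (ω := ω) hab hbc hac hnac hdS
  obtain ⟨hVT, hVTb, hVTc⟩ :=
    commGame_obstructionGame_extended_path (hω d).le hab hbc had hac hdb hcd
  have hST : ({a, b, c} : Finset α) ⊂ {a, b, c, d} :=
    (ssubset_iff_of_subset (by simp [subset_iff])).2 ⟨d, by simp, hdS⟩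
  have hconv := hpres _ obstructionGame_empty
    (obstructionGame_wconvex (fun i => (hω i).le) hac had.ne hcd hpc hpd) _ _ hST
  have hsup : ({a, b, c, d} : Finset α).sup p = p a := by simp [hpb, hpc, hpd]
  rw [sum_insert (by simp [hab.ne, hac]), sum_insert (by simp [hbc.ne]), sum_singleton,
    commGame_obstructionGame_of_notMem (notMem_erase a _),
    commGame_obstructionGame_of_notMem (notMem_erase a _)] at hconv
  simp only [wbar, hsup, hpb, hpc, hVT, hVS, hVTc, hVSb, hVSc, mem_insert, mem_singleton,
    true_or, or_true, and_self, if_true] at hconv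
  nlinarith [mul_pos (hω a) (hω b), mul_le_mul_of_nonneg_left hVTb (hω b).le]

def InducedPathEndsArePendant (G : SimpleGraph α) (L : Finset α) : Prop :=
  ∀ a ∈ L, ∀ b ∈ L, ∀ c ∈ L, ∀ d ∈ L,
    a ≠ c → ¬ G.Adj a c → G.Adj a b → G.Adj b c → G.Adj a d → d = b

theorem Preserves.inducedPathEndsArePendant_level [Fintype α] [DecidableEq α] {ω : α → ℝ}
    {p : α → ℕ} {G : SimpleGraph α} (hpres : Preserves G ω p) (hω : ∀ i, 0 < ω i) (k : ℕ) :
    InducedPathEndsArePendant G (level p k) := by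
  simp only [InducedPathEndsArePendant, level, mem_filter, mem_univ, true_and]
  intro a ha b hb c hc d hd hac hnac hab hbc had
  exact hpres.eq_of_adj hω hac hnac hab hbc had (hb.trans ha.symm) (hc.trans ha.symm)
    (hd.trans ha.symm)

section Shape

variable [Fintype α] {G : SimpleGraph α} {L : Finset α}

lemma exists_induced_path_of_not_isCompleteOn {i : α} (h : ¬ IsCompleteOn G (compOf G L i)) :
    ∃ u v w, u ∈ compOf G L i ∧ v ∈ compOf G L i ∧ w ∈ compOf G L i ∧
      G.Adj u v ∧ G.Adj v w ∧ u ≠ w ∧ ¬ G.Adj u w := by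
  simp only [IsCompleteOn, not_forall] at h
  obtain ⟨x, hx, y, hy, hxy, hnxy⟩ := h
  have hpath := (reflTransGen_adjWithin_symm (mem_compOf.1 hx).2).trans (mem_compOf.1 hy).2
  induction hpath using Relation.ReflTransGen.head_induction_on with
  | refl => exact absurd rfl hxy
  | @head x m hxm _ ih =>
    have hm := mem_compOf_of_adj hx hxm.2.1 hxm.2.2
    by_cases hmy : m = y
    · exact absurd (hmy ▸ hxm.2.2) hnxy
    by_cases hAdj : G.Adj m y
    · exact ⟨x, m, y, hx, hm, hy, hxm.2.2, hAdj, hxy, hnxy⟩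
    · exact ih hm hmy hAdj

lemma isStarOnCenter_compOf (hL : InducedPathEndsArePendant G L) {u v w : α}
    (hu : u ∈ L) (hv : v ∈ L) (hw : w ∈ L) (huv : G.Adj u v) (hvw : G.Adj v w) (huw : u ≠ w)
    (hnuw : ¬ G.Adj u w) : IsStarOnCenter G (compOf G L v) v := by
  have hpendant_u : ∀ t ∈ L, G.Adj u t → t = v := fun t ht hut =>
    hL u hu v hv w hw t ht huw hnuw huv hvw hut
  have hpendant : ∀ s ∈ L, G.Adj v s → ∀ t ∈ L, G.Adj s t → t = v := by
    intro s hs hvs t ht hst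
    by_cases hsu : s = u
    · exact hpendant_u t ht (hsu ▸ hst)
    -- `v` is the only neighbour of `u`, so `s – v – u` is again an induced path
    have hnsu : ¬ G.Adj s u := fun h => hvs.ne (hpendant_u s hs h.symm).symm
    exact hL s hs v hv u hu t ht hsu hnsu hvs.symm huv.symm hst
  have hcenter : ∀ z ∈ compOf G L v, z ≠ v → G.Adj v z := by
    intro z hz
    obtain ⟨-, hvz⟩ := mem_compOf.1 hz
    clear hz
    induction hvz with
    | refl => exact fun h => absurd rfl h
    | @tail y z _ hyz ih =>
      by_cases hyv : y = v
      · exact fun _ => hyv ▸ hyz.2.2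
      · exact fun hzv => absurd (hpendant y hyz.1 (ih hyv) z hyz.2.1 hyz.2.2) hzv
  intro x hx y hy
  constructor
  · intro hxy
    refine ⟨hxy.ne, ?_⟩
    by_contra! h
    exact h.2 (hpendant x (compOf_subset hx) (hcenter x hx h.1) y (compOf_subset hy) hxy)
  · rintro ⟨hxy, rfl | rfl⟩
    · exact hcenter y hy (Ne.symm hxy)
    · exact (hcenter x hx hxy).symm

theorem isCompleteOn_or_isStarOn_compOf (hL : InducedPathEndsArePendant G L) (i : α) :
    IsCompleteOn G (compOf G L i) ∨ IsStarOn G (compOf G L i) := by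
  refine or_iff_not_imp_left.2 fun hnc => ?_
  obtain ⟨u, v, w, hu, hv, hw, huv, hvw, huw, hnuw⟩ :=
    exists_induced_path_of_not_isCompleteOn hnc
  refine ⟨v, hv, ?_⟩
  rw [← compOf_eq_of_mem hv]
  exact isStarOnCenter_compOf hL (compOf_subset hu) (compOf_subset hv) (compOf_subset hw)
    huv hvw huw hnuw

end Shape

theorem level_components_complete_or_star_general [Fintype α] [DecidableEq α]
    (ω : α → ℝ) (hω : ∀ i, 0 < ω i) (p : α → ℕ)
    (G : SimpleGraph α) (hpres : Preserves G ω p)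
    (k : ℕ) (i : α) :
    IsCompleteOn G (compOf G (level p k) i) ∨ IsStarOn G (compOf G (level p k) i) :=
  isCompleteOn_or_isStarOn_compOf (hpres.inducedPathEndsArePendant_level hω k) i

/-- If `G` preserves `(ω,Σ)`-convexity then, for every priority level `k`, every connected
component of the subgraph `G_k` induced by the players of priority `k` is a complete graph
or a star. -/
theorem level_components_complete_or_star [Fintype α] [DecidableEq α]
    (ω : α → ℝ) (hω : ∀ i, 0 < ω i) (p : α → ℕ) (hp : ∀ i, 1 ≤ p i)
    (G : SimpleGraph α) (hpres : Preserves G ω p)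
    (k : ℕ) (i : α) (hi : p i = k) :
    IsCompleteOn G (compOf G (level p k) i) ∨ IsStarOn G (compOf G (level p k) i) :=
  level_components_complete_or_star_general ω hω p G hpres k i

end
end

section
/- Let (ω,Σ) be a weight system with at least two priority levels on a finite player set N and let G=(N,E) be a graph preserving (ω,Σ)-convexity. Let k, k', k'' be priority levels with k ≤ k' < k''. Let C_1 be a connected component of G_k and C_2 a connected component of G_{k'}, each linked (i.e., joined by at least one edge of G) to a connected component C of G_{k''}. Then there exists a vertex i of C such that some vertex of C_1 is adjacent to i and some vertex of C_2 is adjacent to i. -/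
open Finset

variable {α : Type*}

noncomputable section

open scoped Classical

/-!
Suppose that no vertex of `C` is adjacent to both `C₁` and `C₂`. A shortest walk
`r 0, …, r n` from `C₁` to `C₂` whose inner vertices lie in `C` is then an induced path with
`n ≥ 3`, except that its ends `r 0`, `r n` may be adjacent; its inner vertices have priority `k''`
and its ends lower priorities. On such a path we build an `(ω,Σ)`-convex game that only sees how
many inner vertices a coalition contains and which ends it contains, and whose communication game
violates `(ω,Σ)`-convexity at `S = T ∖ {r n} ⊂ T = {r 0, …, r n}`. Only the inner vertices carry
weight in `T`, and deleting one of them splits the path (or opens the cycle) in such a way that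
every second difference `Δᵢ v^G(T) - Δᵢ v^G(S)` is `≤ 0`, and `< 0` for `i = r 1`.
-/

open Relation

section Components

variable {G : SimpleGraph α}

def InducedAdj (G : SimpleGraph α) (S : Finset α) (x y : α) : Prop :=
  x ∈ S ∧ y ∈ S ∧ G.Adj x y

def ConnectedOn (G : SimpleGraph α) (S : Finset α) : Prop :=
  ∀ x ∈ S, ∀ y ∈ S, ReflTransGen (InducedAdj G S) x y

instance (S : Finset α) : Std.Symm (InducedAdj G S) :=
  ⟨fun _ _ h => ⟨h.2.1, h.1, h.2.2.symm⟩⟩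

lemma reflTransGen_inducedAdj_symm {S : Finset α} {x y : α}
    (h : ReflTransGen (InducedAdj G S) x y) : ReflTransGen (InducedAdj G S) y x :=
  Std.Symm.symm _ _ h

lemma inducedAdj_mono {S T : Finset α} (h : S ⊆ T) : InducedAdj G S ≤ InducedAdj G T :=
  fun _ _ hxy => ⟨h hxy.1, h hxy.2.1, hxy.2.2⟩

lemma ConnectedOn.union [DecidableEq α] {A B : Finset α} (hA : ConnectedOn G A)
    (hB : ConnectedOn G B) {x y : α} (hx : x ∈ A) (hy : y ∈ B) (hxy : G.Adj x y) :
    ConnectedOn G (A ∪ B) := by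
  have hlift : ∀ {S}, S ⊆ A ∪ B → ConnectedOn G S → ∀ u ∈ S, ∀ w ∈ S,
      ReflTransGen (InducedAdj G (A ∪ B)) u w :=
    fun hS hconn u hu w hw => ReflTransGen.mono (inducedAdj_mono hS) _ _ (hconn u hu w hw)
  have hxy' : ReflTransGen (InducedAdj G (A ∪ B)) x y :=
    .single ⟨mem_union_left _ hx, mem_union_right _ hy, hxy⟩
  intro u hu w hw
  rcases mem_union.1 hu with hu | hu <;> rcases mem_union.1 hw with hw | hw
  · exact hlift subset_union_left hA u hu w hw
  · exact ((hlift subset_union_left hA u hu x hx).trans hxy').trans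
      (hlift subset_union_right hB y hy w hw)
  · exact ((hlift subset_union_right hB u hu y hy).trans (reflTransGen_inducedAdj_symm hxy')).trans
      (hlift subset_union_left hA x hx w hw)
  · exact hlift subset_union_right hB u hu w hw

variable [Fintype α]

lemma mem_compOf_s14 {S : Finset α} {x y : α} :
    y ∈ compOf G S x ↔ y ∈ S ∧ ReflTransGen (InducedAdj G S) x y :=
  mem_filter

lemma connectedOn_compOf (S : Finset α) (x : α) : ConnectedOn G (compOf G S x) := by
  have hx : ∀ y ∈ compOf G S x, ReflTransGen (InducedAdj G (compOf G S x)) x y := by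
    intro y hy
    induction (mem_compOf_s14.1 hy).2 with
    | refl => exact .refl
    | @tail c d hxc hcd ih =>
      have hc : c ∈ compOf G S x := mem_compOf_s14.2 ⟨hcd.1, hxc⟩
      exact (ih hc).tail ⟨hc, hy, hcd.2.2⟩
  intro y hy z hz
  exact (reflTransGen_inducedAdj_symm (hx y hy)).trans (hx z hz)

lemma compOf_eq_of_connectedOn {S : Finset α} (hS : ConnectedOn G S) {x : α} (hx : x ∈ S) :
    compOf G S x = S :=
  (filter_subset _ _).antisymm fun y hy => mem_compOf_s14.2 ⟨hy, hS x hx y hy⟩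

variable [DecidableEq α]

lemma compOf_union_of_separated {A B : Finset α} (hAB : ∀ x ∈ A, ∀ y ∈ B, ¬ G.Adj x y)
    {x : α} (hx : x ∈ A) : compOf G (A ∪ B) x = compOf G A x := by
  ext y
  simp only [mem_compOf_s14]
  constructor
  · rintro ⟨-, hxy⟩
    induction hxy with
    | refl => exact ⟨hx, .refl⟩
    | @tail c d _ hcd ih =>
      obtain ⟨hc, hxc⟩ := ih
      have hd : d ∈ A := (mem_union.1 hcd.2.1).resolve_right fun hd => hAB c hc d hd hcd.2.2
      exact ⟨hd, hxc.tail ⟨hc, hd, hcd.2.2⟩⟩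
  · rintro ⟨hy, hxy⟩
    exact ⟨mem_union_left _ hy, ReflTransGen.mono (inducedAdj_mono subset_union_left) _ _ hxy⟩

lemma commGame_union {A B : Finset α} (hdisj : Disjoint A B)
    (hAB : ∀ x ∈ A, ∀ y ∈ B, ¬ G.Adj x y) (v : Finset α → ℝ) :
    commGame G v (A ∪ B) = commGame G v A + commGame G v B := by
  have hBA : ∀ x ∈ B, ∀ y ∈ A, ¬ G.Adj x y := fun x hx y hy h => hAB y hy x hx h.symm
  have himage : (A ∪ B).image (compOf G (A ∪ B)) =
      A.image (compOf G A) ∪ B.image (compOf G B) := by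
    rw [image_union]
    congr 1
    · exact image_congr fun x hx => compOf_union_of_separated hAB hx
    · rw [union_comm]
      exact image_congr fun x hx => compOf_union_of_separated hBA hx
  have hcomp : ∀ {S : Finset α} {D}, D ∈ S.image (compOf G S) → D ⊆ S ∧ D.Nonempty := by
    rintro S _ hD
    obtain ⟨x, hx, rfl⟩ := mem_image.1 hD
    exact ⟨filter_subset _ _, x, mem_compOf_s14.2 ⟨hx, .refl⟩⟩
  rw [commGame, himage, sum_union]
  · rfl
  refine disjoint_left.2 fun D hDA hDB => ?_
  obtain ⟨hDA, x, hx⟩ := hcomp hDA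
  exact disjoint_left.1 hdisj (hDA hx) ((hcomp hDB).1 hx)

lemma commGame_of_connectedOn {S : Finset α} (hS : ConnectedOn G S) {v : Finset α → ℝ}
    (hv : v ∅ = 0) : commGame G v S = v S := by
  rcases S.eq_empty_or_nonempty with rfl | hne
  · simp [commGame, hv]
  rw [commGame, image_congr (g := fun _ => S) fun x hx => compOf_eq_of_connectedOn hS hx,
    image_const hne, sum_singleton]

end Components

section InjOn

variable {β : Type*} [DecidableEq α] {f : β → α} {u s t : Finset β}

lemma mem_image_iff_of_injOn (hf : Set.InjOn f u) (hs : s ⊆ u) {j : β} (hj : j ∈ u) :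
    f j ∈ s.image f ↔ j ∈ s := by
  simpa only [← mem_coe, coe_image] using hf.mem_image_iff (coe_subset.2 hs) hj

variable [DecidableEq β]

lemma image_erase_of_injOn (hf : Set.InjOn f u) (hs : s ⊆ u) {j : β} (hj : j ∈ u) :
    (s.image f).erase (f j) = (s.erase j).image f := by
  ext y
  simp only [mem_erase, mem_image]
  constructor
  · rintro ⟨hne, x, hx, rfl⟩
    exact ⟨x, ⟨fun h => hne (h ▸ rfl), hx⟩, rfl⟩
  · rintro ⟨x, ⟨hxj, hx⟩, rfl⟩
    exact ⟨fun h => hxj (hf (hs hx) hj h), x, hx, rfl⟩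

lemma disjoint_image_of_injOn (hf : Set.InjOn f u) (hs : s ⊆ u) (ht : t ⊆ u)
    (hst : Disjoint s t) : Disjoint (s.image f) (t.image f) := by
  rw [disjoint_iff_inter_eq_empty,
    ← image_inter_of_injOn _ _ (hf.mono (by simpa using And.intro hs ht)),
    disjoint_iff_inter_eq_empty.1 hst, image_empty]

end InjOn

lemma connectedOn_image [DecidableEq α] {G : SimpleGraph α} {r : ℕ → α} {s : Finset ℕ}
    (hs : (s : Set ℕ).OrdConnected) (hadj : ∀ i ∈ s, i + 1 ∈ s → G.Adj (r i) (r (i + 1))) :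
    ConnectedOn G (s.image r) := by
  have hmono : ∀ i ∈ s, ∀ k ∈ s, i ≤ k →
      ReflTransGen (InducedAdj G (s.image r)) (r i) (r k) := by
    intro i hi k hk hik
    induction k, hik using Nat.le_induction with
    | base => exact .refl
    | succ k hik ih =>
      have hk' : k ∈ s := hs.out hi hk ⟨hik, k.le_succ⟩
      exact (ih hk').tail ⟨mem_image_of_mem r hk', mem_image_of_mem r hk, hadj k hk' hk⟩
  simp only [ConnectedOn, mem_image, forall_exists_index, and_imp]
  rintro _ i hi rfl _ k hk rfl
  rcases le_total i k with h | h
  · exact hmono i hi k hk h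
  · exact reflTransGen_inducedAdj_symm (hmono k hk i hi h)

section ProfileGames

variable [DecidableEq α]

lemma wconvex_of_marginal_mono {ω : α → ℝ} (hω : ∀ i, 0 ≤ ω i) {p : α → ℕ}
    {v : Finset α → ℝ}
    (h : ∀ S T i, S ⊆ T → i ∈ S → p i = T.sup p → v S - v (S.erase i) ≤ v T - v (T.erase i)) :
    WConvex ω p v := by
  intro S T hST
  refine sum_nonneg fun i hi => ?_
  unfold wbar
  split_ifs with hw
  · exact mul_nonneg (hω i) (by linarith [h S T i hST.subset hi hw.2])
  · simp

def profileGame (Q : Finset α) (a b : α) (Φ : ℕ → Prop → Prop → ℝ) (X : Finset α) : ℝ :=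
  Φ #(X ∩ Q) (a ∈ X) (b ∈ X)

lemma wconvex_profileGame {ω : α → ℝ} (hω : ∀ i, 0 ≤ ω i) {p : α → ℕ} {K : ℕ} {Q : Finset α}
    {a b : α} (hQ : ∀ q ∈ Q, p q = K) (ha : p a < K) (hb : p b < K)
    {Φ : ℕ → Prop → Prop → ℝ} (hΦ₀ : ∀ A B, Φ 0 A B = 0)
    (hΦ : ∀ c c' (A A' B B' : Prop), c ≤ c' → c' < #Q → (A → A') → (B → B') →
      Φ (c + 1) A B - Φ c A B ≤ Φ (c' + 1) A' B' - Φ c' A' B') :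
    WConvex ω p (profileGame Q a b Φ) := by
  refine wconvex_of_marginal_mono hω fun S T i hST hiS hiT => ?_
  rcases (T ∩ Q).eq_empty_or_nonempty with hTQ | ⟨q, hq⟩
  · have h₀ : ∀ X ⊆ T, profileGame Q a b Φ X = 0 := fun X hX => by
      rw [profileGame, card_eq_zero.2 (subset_empty.1 (hTQ ▸ inter_subset_inter_right hX)), hΦ₀]
    rw [h₀ S hST, h₀ T le_rfl, h₀ _ ((erase_subset _ _).trans hST), h₀ _ (erase_subset _ _)]
  have hKi : K ≤ p i := hiT ▸ hQ q (mem_inter.1 hq).2 ▸ le_sup (mem_inter.1 hq).1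
  have hab : ∀ X : Finset α, (a ∈ X.erase i ↔ a ∈ X) ∧ (b ∈ X.erase i ↔ b ∈ X) := fun X =>
    ⟨mem_erase.trans (and_iff_right (ne_of_apply_ne p (by omega))),
      mem_erase.trans (and_iff_right (ne_of_apply_ne p (by omega)))⟩
  by_cases hiQ : i ∈ Q
  · have hc : ∀ X, i ∈ X → #(X ∩ Q) = #(X.erase i ∩ Q) + 1 := fun X hX => by
      rw [erase_inter, card_erase_add_one (mem_inter.2 ⟨hX, hiQ⟩)]
    simp only [profileGame, hc S hiS, hc T (hST hiS), (hab S).1, (hab S).2, (hab T).1, (hab T).2]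
    refine hΦ _ _ _ _ _ _ (card_le_card (inter_subset_inter_right (erase_subset_erase i hST)))
      ?_ (@hST a) (@hST b)
    rw [Nat.lt_iff_add_one_le, ← hc T (hST hiS)]
    exact card_le_card inter_subset_right
  · have hQi : ∀ X : Finset α, X.erase i ∩ Q = X ∩ Q := fun X => by
      rw [erase_inter, erase_eq_of_notMem fun h => hiQ (mem_inter.1 h).2]
    simp [profileGame, hQi, hab]

/-- Used when the ends of the path are not adjacent. The last term makes `b` worth `1` to
coalitions of inner vertices without `a`, which `v^G` sees on the part of the path beyond a
deleted inner vertex but not on the whole path; the rest, `(c + [A])²` up to a modular term,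
makes the game convex. -/
def pathProfile (c : ℕ) (A B : Prop) : ℝ :=
  c ^ 2 + (if A then 2 * c else 0) + (if B ∧ ¬A ∧ c ≠ 0 then 1 else 0)

/-- Used when the ends of the path are adjacent, `N` being the number of inner vertices. The
penalty on coalitions containing the whole cycle cancels the positive second difference `2` that
the quadratic part alone has at the last inner vertex. -/
def cycleProfile (N c : ℕ) (A B : Prop) : ℝ :=
  c ^ 2 + (if A then 2 * c else 0) + (if B then 2 * c else 0) - (if A ∧ B ∧ c = N then 2 else 0)

lemma pathProfile_succ_sub (c : ℕ) (A B : Prop) :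
    pathProfile (c + 1) A B - pathProfile c A B =
      2 * c + 1 + ((if A then 2 else 0) + (if B ∧ ¬A ∧ c = 0 then 1 else 0)) := by
  unfold pathProfile
  rcases c.eq_zero_or_pos with rfl | hc
  · simp only [CharP.cast_eq_zero, ne_eq, not_true_eq_false, and_false, if_false]
    split_ifs <;> simp_all
  · simp only [ne_eq, Nat.add_one_ne_zero, not_false_eq_true, and_true, hc.ne', and_false]
    push_cast
    split_ifs <;> ring

lemma pathProfile_mono {c c' : ℕ} (A A' B B' : Prop) (hc : c ≤ c') (hA : A → A')
    (hB : B → B') :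
    pathProfile (c + 1) A B - pathProfile c A B ≤
      pathProfile (c' + 1) A' B' - pathProfile c' A' B' := by
  rw [pathProfile_succ_sub, pathProfile_succ_sub]
  rcases hc.eq_or_lt with rfl | hlt
  · gcongr 2 * c + 1 + ?_
    by_cases hA' : A' <;> by_cases hAi : A <;> simp_all <;> split_ifs <;> simp_all
  · have hlt' : (c : ℝ) + 1 ≤ c' := by exact_mod_cast hlt
    have hL : (if A then (2 : ℝ) else 0) + (if B ∧ ¬A ∧ c = 0 then 1 else 0) ≤ 2 := by
      by_cases hAi : A
      · simp [hAi]
      · simp only [hAi, if_false, zero_add]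
        split_ifs <;> norm_num
    have hR : (0 : ℝ) ≤ (if A' then (2 : ℝ) else 0) + (if B' ∧ ¬A' ∧ c' = 0 then 1 else 0) := by
      positivity
    linarith

lemma cycleProfile_succ_sub {N c : ℕ} (hc : c < N) (A B : Prop) :
    cycleProfile N (c + 1) A B - cycleProfile N c A B =
      2 * c + 1 + ((if A then 2 else 0) + (if B then 2 else 0) -
        (if A ∧ B ∧ c + 1 = N then 2 else 0)) := by
  simp only [cycleProfile, hc.ne, and_false, if_false]
  push_cast
  split_ifs <;> ring

lemma cycleProfile_mono {N c c' : ℕ} (A A' B B' : Prop) (hc : c ≤ c') (hc' : c' < N)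
    (hA : A → A') (hB : B → B') :
    cycleProfile N (c + 1) A B - cycleProfile N c A B ≤
      cycleProfile N (c' + 1) A' B' - cycleProfile N c' A' B' := by
  rw [cycleProfile_succ_sub (hc.trans_lt hc'), cycleProfile_succ_sub hc']
  have hcc : (c : ℝ) ≤ c' := by exact_mod_cast hc
  by_cases hAB : A ∧ B
  · simp only [hAB, hA hAB.1, hB hAB.2, true_and, if_true]
    rcases hc.eq_or_lt with rfl | hlt
    · exact le_rfl
    · have hlt' : (c : ℝ) + 1 ≤ c' := by exact_mod_cast hlt
      rw [if_neg (by omega)]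
      split_ifs <;> linarith
  · rw [if_neg (show ¬(A ∧ B ∧ c + 1 = N) from fun h => hAB ⟨h.1, h.2.1⟩)]
    by_cases hAB' : A' ∧ B'
    · have hL : (if A then (2 : ℝ) else 0) + (if B then 2 else 0) ≤ 2 := by
        by_cases hAi : A <;> by_cases hBi : B <;> simp_all
      have hR : (2 : ℝ) ≤ (if A' then 2 else 0) + (if B' then 2 else 0) -
          (if A' ∧ B' ∧ c' + 1 = N then 2 else 0) := by
        simp only [hAB', if_true, true_and]
        split_ifs <;> norm_num
      linarith
    · rw [if_neg (show ¬(A' ∧ B' ∧ c' + 1 = N) from fun h => hAB' ⟨h.1, h.2.1⟩)]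
      gcongr ?_ + (?_ + ?_ - 0)
      · linarith
      · by_cases hAi : A <;> by_cases hA'i : A' <;> simp_all
      · by_cases hBi : B <;> by_cases hB'i : B' <;> simp_all

end ProfileGames

def secondDiff [DecidableEq α] (w : Finset α → ℝ) (T : Finset α) (b i : α) : ℝ :=
  w T - w (T.erase i) - w (T.erase b) + w ((T.erase b).erase i)

section InducedPath

variable [DecidableEq α] {G : SimpleGraph α} {r : ℕ → α} {n : ℕ}

lemma image_Icc_erase (hr : Set.InjOn r (Icc 0 n)) {j : ℕ} (hj : j ≤ n) :
    ((Icc 0 n).image r).erase (r j) = (Ico 0 j ∪ Ioc j n).image r := by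
  rw [image_erase_of_injOn hr subset_rfl (by simpa using hj)]
  congr 1
  ext i; simp only [mem_erase, mem_Icc, mem_union, mem_Ico, mem_Ioc]; omega

lemma image_Ico_erase (hr : Set.InjOn r (Icc 0 n)) {j : ℕ} (hj : j < n) :
    ((Ico 0 n).image r).erase (r j) = (Ico 0 j ∪ Ioo j n).image r := by
  rw [image_erase_of_injOn hr Ico_subset_Icc_self (by simpa using hj.le)]
  congr 1
  ext i; simp only [mem_erase, mem_Ico, mem_union, mem_Ioo]; omega

lemma image_Icc_erase_right (hr : Set.InjOn r (Icc 0 n)) :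
    ((Icc 0 n).image r).erase (r n) = (Ico 0 n).image r := by
  rw [image_erase_of_injOn hr subset_rfl (by simp), Icc_erase_right]

lemma profileGame_image (hr : Set.InjOn r (Icc 0 n)) {s : Finset ℕ} (hs : s ⊆ Icc 0 n)
    (Φ : ℕ → Prop → Prop → ℝ) :
    profileGame ((Ioo 0 n).image r) (r 0) (r n) Φ (s.image r) =
      Φ #(s ∩ Ioo 0 n) (0 ∈ s) (n ∈ s) := by
  have hsQ : s ∪ Ioo 0 n ⊆ Icc 0 n := union_subset hs Ioo_subset_Icc_self
  rw [profileGame,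
    ← image_inter_of_injOn _ _ (hr.mono (by simpa only [coe_union] using coe_subset.2 hsQ)),
    card_image_of_injOn (hr.mono (coe_subset.2 (inter_subset_left.trans hs))),
    mem_image_iff_of_injOn hr hs (by simp), mem_image_iff_of_injOn hr hs (by simp)]

variable [Fintype α]

lemma commGame_profileGame_image (hr : Set.InjOn r (Icc 0 n))
    (hadj : ∀ i < n, G.Adj (r i) (r (i + 1))) {Φ : ℕ → Prop → Prop → ℝ}
    (hΦ : Φ 0 False False = 0) {s : Finset ℕ} (hs : s ⊆ Icc 0 n)
    (hs' : (s : Set ℕ).OrdConnected) :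
    commGame G (profileGame ((Ioo 0 n).image r) (r 0) (r n) Φ) (s.image r) =
      Φ #(s ∩ Ioo 0 n) (0 ∈ s) (n ∈ s) := by
  have hconn : ConnectedOn G (s.image r) := connectedOn_image hs' fun i _ hi => hadj i (by
    have := hs hi; simp only [mem_Icc] at this; omega)
  rw [commGame_of_connectedOn hconn (by simpa [profileGame] using hΦ), profileGame_image hr hs]

lemma commGame_image_union (hr : Set.InjOn r (Icc 0 n))
    (hchord : ∀ i k, i + 1 < k → k ≤ n → G.Adj (r i) (r k) → i = 0 ∧ k = n)
    {s t : Finset ℕ} (hs : s ⊆ Icc 0 n) (ht : t ⊆ Icc 0 n) (hgap : ∀ i ∈ s, ∀ k ∈ t, i + 1 < k)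
    (hends : 0 ∈ s → n ∈ t → ¬ G.Adj (r 0) (r n)) (v : Finset α → ℝ) :
    commGame G v ((s ∪ t).image r) = commGame G v (s.image r) + commGame G v (t.image r) := by
  have hdisj : Disjoint s t :=
    disjoint_left.2 fun i hi hit => by have := hgap i hi i hit; omega
  rw [image_union]
  refine commGame_union (disjoint_image_of_injOn hr hs ht hdisj) ?_ v
  simp only [mem_image, forall_exists_index, and_imp]
  rintro _ i hi rfl _ k hk rfl hik
  obtain ⟨rfl, rfl⟩ := hchord i k (hgap i hi k hk) (mem_Icc.1 (ht hk)).2 hik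
  exact hends hi hk hik

lemma secondDiff_profileGame (hr : Set.InjOn r (Icc 0 n))
    (hadj : ∀ i < n, G.Adj (r i) (r (i + 1)))
    (hchord : ∀ i k, i + 1 < k → k ≤ n → G.Adj (r i) (r k) → i = 0 ∧ k = n)
    {Φ : ℕ → Prop → Prop → ℝ} (hΦ : Φ 0 False False = 0) {j : ℕ} (hj : j ∈ Ioo 0 n) :
    secondDiff (commGame G (profileGame ((Ioo 0 n).image r) (r 0) (r n) Φ)) ((Icc 0 n).image r)
      (r n) (r j) =
      Φ (n - 1) True True -
        commGame G (profileGame ((Ioo 0 n).image r) (r 0) (r n) Φ) ((Ico 0 j ∪ Ioc j n).image r) -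
        Φ (n - 1) True False + (Φ (j - 1) True False + Φ (n - j - 1) False False) := by
  obtain ⟨hj0, hjn⟩ := mem_Ioo.1 hj
  have hA : Ico 0 j ⊆ Icc 0 n := Ico_subset_Icc_self.trans (Icc_subset_Icc_right hjn.le)
  have hB : Ioo j n ⊆ Icc 0 n := Ioo_subset_Icc_self.trans (Icc_subset_Icc_left j.zero_le)
  rw [secondDiff, image_Icc_erase hr hjn.le, image_Icc_erase_right hr, image_Ico_erase hr hjn,
    commGame_image_union hr hchord hA hB (fun i hi k hk => by simp at hi hk; omega) (by simp),
    commGame_profileGame_image hr hadj hΦ subset_rfl (by rw [coe_Icc]; infer_instance),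
    commGame_profileGame_image hr hadj hΦ Ico_subset_Icc_self (by rw [coe_Ico]; infer_instance),
    commGame_profileGame_image hr hadj hΦ hA (by rw [coe_Ico]; infer_instance),
    commGame_profileGame_image hr hadj hΦ hB (by rw [coe_Ioo]; infer_instance),
    inter_eq_right.2 Ioo_subset_Icc_self, inter_eq_right.2 Ioo_subset_Ico_self,
    inter_eq_left.2 (Ioo_subset_Ioo_left hj0.le),
    show Ico 0 j ∩ Ioo 0 n = Ioo 0 j by ext; simp only [mem_inter, mem_Ico, mem_Ioo]; omega]
  simp [hj0, hjn, hj0.trans hjn, hjn.not_gt]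

lemma secondDiff_pathProfile (hr : Set.InjOn r (Icc 0 n))
    (hadj : ∀ i < n, G.Adj (r i) (r (i + 1)))
    (hchord : ∀ i k, i + 1 < k → k ≤ n → G.Adj (r i) (r k) → i = 0 ∧ k = n)
    (hab : ¬ G.Adj (r 0) (r n)) {j : ℕ} (hj : j ∈ Ioo 0 n) :
    secondDiff (commGame G (profileGame ((Ioo 0 n).image r) (r 0) (r n) pathProfile))
      ((Icc 0 n).image r) (r n) (r j) = if j + 1 < n then -1 else 0 := by
  obtain ⟨hj0, hjn⟩ := mem_Ioo.1 hj
  have hΦ : pathProfile 0 False False = 0 := by simp [pathProfile]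
  have hA : Ico 0 j ⊆ Icc 0 n := Ico_subset_Icc_self.trans (Icc_subset_Icc_right hjn.le)
  have hB : Ioc j n ⊆ Icc 0 n := Ioc_subset_Icc_self.trans (Icc_subset_Icc_left j.zero_le)
  rw [secondDiff_profileGame hr hadj hchord hΦ hj,
    commGame_image_union hr hchord hA hB (fun i hi k hk => by simp at hi hk; omega)
      fun _ _ => hab,
    commGame_profileGame_image hr hadj hΦ hA (by rw [coe_Ico]; infer_instance),
    commGame_profileGame_image hr hadj hΦ hB (by rw [coe_Ioc]; infer_instance),
    show Ico 0 j ∩ Ioo 0 n = Ioo 0 j by ext; simp only [mem_inter, mem_Ico, mem_Ioo]; omega,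
    show Ioc j n ∩ Ioo 0 n = Ioo j n by ext; simp only [mem_inter, mem_Ioc, mem_Ioo]; omega]
  simp [pathProfile, hj0, hjn]
  split_ifs <;> first | omega | ring

lemma secondDiff_cycleProfile (hr : Set.InjOn r (Icc 0 n))
    (hadj : ∀ i < n, G.Adj (r i) (r (i + 1)))
    (hchord : ∀ i k, i + 1 < k → k ≤ n → G.Adj (r i) (r k) → i = 0 ∧ k = n)
    (hab : G.Adj (r 0) (r n)) {j : ℕ} (hj : j ∈ Ioo 0 n) :
    secondDiff (commGame G (profileGame ((Ioo 0 n).image r) (r 0) (r n) (cycleProfile (n - 1))))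
      ((Icc 0 n).image r) (r n) (r j) = -2 * j * (n - 1 - j) := by
  obtain ⟨hj0, hjn⟩ := mem_Ioo.1 hj
  have hΦ : cycleProfile (n - 1) 0 False False = 0 := by simp [cycleProfile]
  have hconn : ConnectedOn G ((Ico 0 j ∪ Ioc j n).image r) := by
    rw [image_union]
    refine ConnectedOn.union (connectedOn_image ?_ fun i _ hi => hadj i (by simp at hi; omega))
      (connectedOn_image ?_ fun i _ hi => hadj i (by simp at hi; omega))
      (mem_image_of_mem r (by simpa using hj0)) (mem_image_of_mem r (by simpa using hjn)) hab
    · rw [coe_Ico]; infer_instance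
    · rw [coe_Ioc]; infer_instance
  have hAB : Ico 0 j ∪ Ioc j n ⊆ Icc 0 n := fun i hi => by simp at hi ⊢; omega
  rw [secondDiff_profileGame hr hadj hchord hΦ hj,
    commGame_of_connectedOn hconn (by simpa [profileGame] using hΦ), profileGame_image hr hAB,
    show (Ico 0 j ∪ Ioc j n) ∩ Ioo 0 n = (Ioo 0 n).erase j by
      ext; simp only [mem_inter, mem_union, mem_Ico, mem_Ioc, mem_Ioo, mem_erase]; omega,
    card_erase_of_mem hj, Nat.card_Ioo]
  obtain ⟨x, rfl⟩ : ∃ x, j = x + 1 := ⟨j - 1, by omega⟩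
  obtain ⟨y, rfl⟩ : ∃ y, n = x + y + 2 := ⟨n - x - 2, by omega⟩
  rw [show x + y + 2 - (x + 1) - 1 = y by omega]
  simp [cycleProfile]
  ring

lemma not_preserves_of_secondDiff_neg {ω : α → ℝ} (hω : ∀ i, 0 < ω i) {p : α → ℕ} {K : ℕ}
    (hr : Set.InjOn r (Icc 0 n)) (hn : 1 < n) (h₀ : p (r 0) < K) (hₙ : p (r n) < K)
    (hK : ∀ i ∈ Ioo 0 n, p (r i) = K) {v : Finset α → ℝ} (hv₀ : v ∅ = 0) (hv : WConvex ω p v)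
    (hle : ∀ j ∈ Ioo 0 n, secondDiff (commGame G v) ((Icc 0 n).image r) (r n) (r j) ≤ 0)
    (hlt : secondDiff (commGame G v) ((Icc 0 n).image r) (r n) (r 1) < 0) :
    ¬ Preserves G ω p := by
  intro hpres
  have h₁ : 1 ∈ Ioo 0 n := by simpa using hn
  have hsup : ((Icc 0 n).image r).sup p = K := by
    refine le_antisymm (Finset.sup_le ?_) ?_
    · simp only [mem_image, mem_Icc, forall_exists_index, and_imp]
      rintro _ i - hi rfl
      rcases i.eq_zero_or_pos with rfl | hi0
      · exact h₀.le
      rcases hi.eq_or_lt with rfl | hin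
      · exact hₙ.le
      · exact (hK i (mem_Ioo.2 ⟨hi0, hin⟩)).le
    · exact hK 1 h₁ ▸ le_sup (mem_image_of_mem r (Ioo_subset_Icc_self h₁))
  have hweight : ∀ j ∈ Ioo 0 n, wbar ω p ((Icc 0 n).image r) (r j) = ω (r j) := fun j hj =>
    if_pos ⟨mem_image_of_mem r (Ioo_subset_Icc_self hj), by rw [hK j hj, hsup]⟩
  have hneg : ∑ i ∈ ((Icc 0 n).image r).erase (r n), wbar ω p ((Icc 0 n).image r) i *
      secondDiff (commGame G v) ((Icc 0 n).image r) (r n) i < 0 := by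
    rw [image_Icc_erase_right hr, sum_image (hr.mono (coe_subset.2 Ico_subset_Icc_self))]
    refine (sum_lt_sum (g := fun _ => 0) (fun j hj => ?_)
      ⟨1, mem_Ico.2 ⟨zero_le_one, hn⟩, ?_⟩).trans_eq sum_const_zero
    · rcases j.eq_zero_or_pos with rfl | hj0
      · rw [wbar, if_neg fun h => h₀.ne (h.2.trans hsup), zero_mul]
      · have hj' : j ∈ Ioo 0 n := mem_Ioo.2 ⟨hj0, (mem_Ico.1 hj).2⟩
        rw [hweight j hj']
        exact mul_nonpos_of_nonneg_of_nonpos (hω _).le (hle j hj')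
    · rw [hweight 1 h₁]
      exact mul_neg_of_pos_of_neg (hω _) hlt
  exact (not_le.2 hneg) (hpres v hv₀ hv _ _ (erase_ssubset (mem_image_of_mem r (by simp))))

theorem not_preserves_of_induced_path {ω : α → ℝ} (hω : ∀ i, 0 < ω i) {p : α → ℕ} {K : ℕ}
    (hn : 3 ≤ n) (hr : Set.InjOn r (Icc 0 n)) (hadj : ∀ i < n, G.Adj (r i) (r (i + 1)))
    (hchord : ∀ i k, i + 1 < k → k ≤ n → G.Adj (r i) (r k) → i = 0 ∧ k = n)
    (h₀ : p (r 0) < K) (hₙ : p (r n) < K) (hK : ∀ i ∈ Ioo 0 n, p (r i) = K) :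
    ¬ Preserves G ω p := by
  have hQ : ∀ q ∈ (Ioo 0 n).image r, p q = K := forall_mem_image.2 hK
  have hcardQ : #((Ioo 0 n).image r) = n - 1 := by
    rw [card_image_of_injOn (hr.mono (coe_subset.2 Ioo_subset_Icc_self)), Nat.card_Ioo,
      Nat.sub_zero]
  have h₁ : 1 ∈ Ioo 0 n := by simp; omega
  by_cases hab : G.Adj (r 0) (r n)
  · have hconv := wconvex_profileGame (fun i => (hω i).le) hQ h₀ hₙ
      (Φ := cycleProfile (n - 1)) (fun A B => by simp [cycleProfile]; omega)
      fun c c' A A' B B' hc hc' => cycleProfile_mono A A' B B' hc (hcardQ ▸ hc')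
    refine not_preserves_of_secondDiff_neg hω hr (by omega) h₀ hₙ hK
      (by simp [profileGame, cycleProfile]) hconv (fun j hj => ?_) ?_
    · rw [secondDiff_cycleProfile hr hadj hchord hab hj]
      have : (j : ℝ) + 1 ≤ n := by exact_mod_cast (mem_Ioo.1 hj).2
      have : (0 : ℝ) ≤ j := j.cast_nonneg
      nlinarith
    · rw [secondDiff_cycleProfile hr hadj hchord hab h₁]
      have : (3 : ℝ) ≤ n := by exact_mod_cast hn
      push_cast
      linarith
  · have hconv := wconvex_profileGame (fun i => (hω i).le) hQ h₀ hₙ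
      (Φ := pathProfile) (fun A B => by simp [pathProfile])
      fun c c' A A' B B' hc _ => pathProfile_mono A A' B B' hc
    refine not_preserves_of_secondDiff_neg hω hr (by omega) h₀ hₙ hK
      (by simp [profileGame, pathProfile]) hconv (fun j hj => ?_) ?_
    · rw [secondDiff_pathProfile hr hadj hchord hab hj]
      split_ifs <;> norm_num
    · rw [secondDiff_pathProfile hr hadj hchord hab h₁, if_pos (by omega)]
      norm_num

end InducedPath

lemma Relation.ReflTransGen.exists_seq {R : α → α → Prop} {x y : α} (h : ReflTransGen R x y) :
    ∃ (m : ℕ) (f : ℕ → α), f 0 = x ∧ f m = y ∧ ∀ i < m, R (f i) (f (i + 1)) := by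
  induction h with
  | refl => exact ⟨0, fun _ => x, rfl, rfl, by simp⟩
  | @tail c d _ hcd ih =>
    obtain ⟨m, f, hf0, hfm, hf⟩ := ih
    refine ⟨m + 1, fun i => if i ≤ m then f i else d, by simpa using hf0, by simp,
      fun i hi => ?_⟩
    rcases Nat.lt_or_ge i m with him | him
    · simpa [him.le, Nat.succ_le_of_lt him] using hf i him
    · obtain rfl : i = m := by omega
      simpa [hfm] using hcd

section Links

variable {G : SimpleGraph α} {C₁ C C₂ : Finset α} {n : ℕ} {r : ℕ → α}

structure IsLink (G : SimpleGraph α) (C₁ C C₂ : Finset α) (n : ℕ) (r : ℕ → α) : Prop where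
  two_le : 2 ≤ n
  start_mem : r 0 ∈ C₁
  end_mem : r n ∈ C₂
  inner_mem : ∀ i, 0 < i → i < n → r i ∈ C
  adj : ∀ i < n, G.Adj (r i) (r (i + 1))

lemma exists_isLink (hC : ConnectedOn G C) (h₁ : Linked G C₁ C) (h₂ : Linked G C₂ C) :
    ∃ n r, IsLink G C₁ C C₂ n r := by
  obtain ⟨a, ha, c₁, hc₁, hac₁⟩ := h₁
  obtain ⟨b, hb, c₂, hc₂, hbc₂⟩ := h₂
  obtain ⟨m, f, hf0, hfm, hf⟩ := (hC c₁ hc₁ c₂ hc₂).exists_seq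
  have hfC : ∀ i ≤ m, f i ∈ C := fun i hi => by
    rcases hi.lt_or_eq with hi | rfl
    · exact (hf i hi).1
    · exact hfm ▸ hc₂
  refine ⟨m + 2, fun i => if i = 0 then a else if i ≤ m + 1 then f (i - 1) else b,
    ⟨by omega, by simpa using ha, by simpa using hb, fun i hi0 hi => ?_, fun i hi => ?_⟩⟩
  · simpa [hi0.ne', show i ≤ m + 1 by omega] using hfC (i - 1) (by omega)
  · rcases i.eq_zero_or_pos with rfl | hi0
    · simpa [hf0] using hac₁
    rcases (show i ≤ m + 1 by omega).lt_or_eq with hi' | rfl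
    · simpa [hi0.ne', hi'.le, show i ≤ m by omega, Nat.sub_add_cancel hi0] using
        (hf (i - 1) (by omega)).2.2
    · simpa [hfm] using hbc₂.symm

lemma IsLink.shortcut (h : IsLink G C₁ C C₂ n r) {i k : ℕ} (hik : i + 1 < k) (hkn : k ≤ n)
    (hadj : G.Adj (r i) (r k)) (hends : 0 < i ∨ k < n) :
    IsLink G C₁ C C₂ (n - (k - i - 1)) fun t => if t ≤ i then r t else r (t + (k - i - 1)) where
  two_le := by omega
  start_mem := by simpa using h.start_mem
  end_mem := by
    simpa [show ¬ n - (k - i - 1) ≤ i by omega, show n - (k - i - 1) + (k - i - 1) = n by omega]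
      using h.end_mem
  inner_mem t ht0 htn := by
    split_ifs with hti
    · exact h.inner_mem t ht0 (by omega)
    · exact h.inner_mem _ (by omega) (by omega)
  adj t ht := by
    rcases Nat.lt_trichotomy t i with hti | rfl | hti
    · simpa [hti.le, Nat.succ_le_of_lt hti] using h.adj t (by omega)
    · simpa [show t + 1 + (k - t - 1) = k by omega] using hadj
    · simpa [show ¬ t ≤ i by omega, show ¬ t + 1 ≤ i by omega,
        show t + 1 + (k - i - 1) = t + (k - i - 1) + 1 by omega] using h.adj _ (by omega)

lemma IsLink.eq_ends_of_adj_of_minimal (h : IsLink G C₁ C C₂ n r)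
    (hmin : ∀ m s, IsLink G C₁ C C₂ m s → n ≤ m) :
    ∀ i k, i + 1 < k → k ≤ n → G.Adj (r i) (r k) → i = 0 ∧ k = n := by
  intro i k hik hkn hadj
  by_contra hends
  have := hmin _ _ (h.shortcut hik hkn hadj (by omega))
  omega

lemma IsLink.three_le (h : IsLink G C₁ C C₂ n r)
    (hnc : ¬ ∃ c ∈ C, (∃ a ∈ C₁, G.Adj a c) ∧ ∃ b ∈ C₂, G.Adj b c) : 3 ≤ n := by
  by_contra hn
  obtain rfl : n = 2 := by have := h.two_le; omega
  exact hnc ⟨r 1, h.inner_mem 1 one_pos one_lt_two, ⟨r 0, h.start_mem, h.adj 0 two_pos⟩,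
    r 2, h.end_mem, (h.adj 1 one_lt_two).symm⟩

lemma IsLink.injOn (h : IsLink G C₁ C C₂ n r)
    (hchord : ∀ i k, i + 1 < k → k ≤ n → G.Adj (r i) (r k) → i = 0 ∧ k = n)
    (hnc : ¬ ∃ c ∈ C, (∃ a ∈ C₁, G.Adj a c) ∧ ∃ b ∈ C₂, G.Adj b c)
    (h₁ : Disjoint C₁ C) (h₂ : Disjoint C₂ C) : Set.InjOn r (Icc 0 n) := by
  have hne : ∀ i k, i < k → k ≤ n → r i ≠ r k := by
    intro i k hik hkn heq
    have := h.two_le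
    rcases i.eq_zero_or_pos with rfl | hi0
    · rcases hkn.lt_or_eq with hkn | rfl
      · exact disjoint_left.1 h₁ h.start_mem (heq ▸ h.inner_mem k hik hkn)
      · exact hnc ⟨r 1, h.inner_mem 1 one_pos (by omega),
          ⟨r 0, h.start_mem, h.adj 0 (by omega)⟩, r 0, heq ▸ h.end_mem, h.adj 0 (by omega)⟩
    rcases hkn.lt_or_eq with hkn | rfl
    · have := hchord i (k + 1) (by omega) (by omega) (heq ▸ h.adj k hkn)
      omega
    · exact disjoint_left.1 h₂ h.end_mem (heq ▸ h.inner_mem i hi0 hik)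
  intro i hi k hk heq
  simp only [coe_Icc, Set.mem_Icc] at hi hk
  by_contra hik
  rcases Nat.lt_or_gt_of_ne hik with hik | hik
  · exact hne i k hik hk.2 heq
  · exact hne k i hik hi.2 heq.symm

end Links

theorem linked_components_common_vertex_general [Fintype α] [DecidableEq α]
    (ω : α → ℝ) (hω : ∀ i, 0 < ω i) (p : α → ℕ)
    (G : SimpleGraph α) (hpres : Preserves G ω p)
    (k k' k'' : ℕ) (hkk' : k ≤ k') (hk'k'' : k' < k'')
    (x₁ x₂ x₃ : α)
    (hL₁ : Linked G (compOf G (level p k) x₁) (compOf G (level p k'') x₃))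
    (hL₂ : Linked G (compOf G (level p k') x₂) (compOf G (level p k'') x₃)) :
    ∃ i ∈ compOf G (level p k'') x₃,
      (∃ a ∈ compOf G (level p k) x₁, G.Adj a i) ∧
      (∃ b ∈ compOf G (level p k') x₂, G.Adj b i) := by
  by_contra hnc
  have hp : ∀ {l x y}, y ∈ compOf G (level p l) x → p y = l := fun hy => by
    simpa [level] using (mem_compOf_s14.1 hy).1
  have hdisj : ∀ {l x}, l < k'' →
      Disjoint (compOf G (level p l) x) (compOf G (level p k'') x₃) :=
    fun hl => disjoint_left.2 fun y hy hy' => by have := hp hy; have := hp hy'; omega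
  have hex := exists_isLink (connectedOn_compOf _ _) hL₁ hL₂
  obtain ⟨r, hr⟩ := Nat.find_spec hex
  have hchord := hr.eq_ends_of_adj_of_minimal fun m s hs => Nat.find_min' hex ⟨s, hs⟩
  exact not_preserves_of_induced_path hω (hr.three_le hnc)
    (hr.injOn hchord hnc (hdisj (by omega)) (hdisj hk'k'')) hr.adj hchord
    (by rw [hp hr.start_mem]; omega) (by rw [hp hr.end_mem]; omega)
    (fun i hi => hp (hr.inner_mem i (mem_Ioo.1 hi).1 (mem_Ioo.1 hi).2)) hpres

/-- If `G` preserves `(ω,Σ)`-convexity (with at least two priority levels), `k ≤ k' < k''`,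
and connected components `C₁` of `G_k` and `C₂` of `G_{k'}` are both linked to a connected
component `C` of `G_{k''}`, then `C₁` and `C₂` are both linked to a common vertex of `C`. -/
theorem linked_components_common_vertex [Fintype α] [DecidableEq α]
    (ω : α → ℝ) (hω : ∀ i, 0 < ω i) (p : α → ℕ) (hp : ∀ i, 1 ≤ p i)
    (htwo : ∃ i j : α, p i ≠ p j)
    (G : SimpleGraph α) (hpres : Preserves G ω p)
    (k k' k'' : ℕ) (hkk' : k ≤ k') (hk'k'' : k' < k'')
    (x₁ x₂ x₃ : α) (h₁ : p x₁ = k) (h₂ : p x₂ = k') (h₃ : p x₃ = k'')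
    (hL₁ : Linked G (compOf G (level p k) x₁) (compOf G (level p k'') x₃))
    (hL₂ : Linked G (compOf G (level p k') x₂) (compOf G (level p k'') x₃)) :
    ∃ i ∈ compOf G (level p k'') x₃,
      (∃ a ∈ compOf G (level p k) x₁, G.Adj a i) ∧
      (∃ b ∈ compOf G (level p k') x₂, G.Adj b i) :=
  linked_components_common_vertex_general ω hω p G hpres k k' k'' hkk' hk'k'' x₁ x₂ x₃ hL₁ hL₂

end
end

section
/- Let N be a finite player set, (ω,Σ) a weight system on N, and (N,v) a TU-game. For nonempty S ⊆ N and i ∈ S, define γ^{N,ω}_{S,i} := Σ_{T : S ⊆ T ⊆ N, p(T)=p(S)} (−1)^{|T|−|S|}·ω_i/ω̄^T if i ∈ S̄, and γ^{N,ω}_{S,i} := 0 if i ∈ S∖S̄. Then for every player i, the (ω,Σ)-weighted Shapley value satisfies Φ^ω_i(v) = Σ_{S ⊆ N with i ∈ S} γ^{N,ω}_{S,i}·(v(S) − v(S∖{i})). -/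
open Finset

variable {α : Type*}

noncomputable section

/-- `ω̄^S = ∑_{i ∈ S̄} ω_i`. -/
def wbarSum [DecidableEq α] (ω : α → ℝ) (p : α → ℕ) (S : Finset α) : ℝ :=
  ∑ i ∈ S, wbar ω p S i

/-- unanimity coefficients `λ_S(v)` (Harsanyi dividends). -/
def unanimityCoeff [DecidableEq α] (v : Finset α → ℝ) (S : Finset α) : ℝ :=
  ∑ T ∈ S.powerset, (-1 : ℝ) ^ (S.card - T.card) * v T

/-- `(ω,Σ)`-weighted Shapley value of player `i` for the game `v` with ground coalition `M`
(note that `wbar ω p S i = 0` unless `i ∈ S̄`). -/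
def wShapley [DecidableEq α] (ω : α → ℝ) (p : α → ℕ) (v : Finset α → ℝ)
    (M : Finset α) (i : α) : ℝ :=
  ∑ S ∈ M.powerset, wbar ω p S i / wbarSum ω p S * unanimityCoeff v S

/-- The coefficient `γ^{N,ω}_{S,i}`:
`γ^{N,ω}_{S,i} = ∑_{T : S ⊆ T ⊆ N, p(T) = p(S)} (−1)^{|T|−|S|} ω_i / ω̄^T` if `i ∈ S̄`,
and `0` otherwise. -/
def gammaCoeff [Fintype α] [DecidableEq α] (ω : α → ℝ) (p : α → ℕ)
    (S : Finset α) (i : α) : ℝ :=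
  if i ∈ S ∧ p i = S.sup p then
    ∑ T ∈ Finset.univ.powerset.filter (fun T => S ⊆ T ∧ T.sup p = S.sup p),
      (-1 : ℝ) ^ (T.card - S.card) * (ω i / wbarSum ω p T)
  else 0

lemma wbar_div_eq [DecidableEq α] (ω : α → ℝ) (p : α → ℕ) (S : Finset α) (i : α) :
    wbar ω p S i / wbarSum ω p S =
      if i ∈ S ∧ p i = S.sup p then ω i / wbarSum ω p S else 0 := by
  unfold wbar; split <;> simp

/-- Key coefficient identity. -/
lemma coeff_eq [Fintype α] [DecidableEq α] (ω : α → ℝ) (p : α → ℕ) (i : α) (T : Finset α) :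
    ∑ S ∈ Finset.univ.powerset.filter (fun S => T ⊆ S),
        (-1 : ℝ) ^ (S.card - T.card) * (wbar ω p S i / wbarSum ω p S) =
      if i ∈ T then gammaCoeff ω p T i else - gammaCoeff ω p (insert i T) i := by
  have step : ∑ S ∈ Finset.univ.powerset.filter (fun S => T ⊆ S),
      (-1 : ℝ) ^ (S.card - T.card) * (wbar ω p S i / wbarSum ω p S)
    = ∑ S ∈ Finset.univ.powerset.filter (fun S => T ⊆ S ∧ (i ∈ S ∧ p i = S.sup p)),
      (-1 : ℝ) ^ (S.card - T.card) * (ω i / wbarSum ω p S) := by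
    rw [Finset.sum_filter, Finset.sum_filter]
    refine Finset.sum_congr rfl fun S _ => ?_
    rw [wbar_div_eq]
    by_cases h1 : T ⊆ S <;> by_cases h2 : i ∈ S ∧ p i = S.sup p <;> simp [h1, h2]
  rw [step]
  by_cases hi : i ∈ T
  · simp only [hi, if_true]
    by_cases hpi : p i = T.sup p
    · unfold gammaCoeff
      rw [if_pos ⟨hi, hpi⟩]
      refine Finset.sum_congr ?_ fun S _ => rfl
      apply Finset.filter_congr
      intro S _
      constructor
      · rintro ⟨h1, _, h3⟩
        refine ⟨h1, le_antisymm ?_ (Finset.sup_mono h1)⟩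
        rw [← h3, hpi]
      · rintro ⟨h1, h2⟩
        exact ⟨h1, h1 hi, by rw [hpi, ← h2]⟩
    · unfold gammaCoeff
      rw [if_neg (by tauto)]
      have hemp : Finset.univ.powerset.filter
          (fun S => T ⊆ S ∧ (i ∈ S ∧ p i = S.sup p)) = ∅ := by
        apply Finset.filter_false_of_mem
        rintro S _ ⟨h1, _, h3⟩
        exact hpi (le_antisymm (Finset.le_sup hi)
          (by rw [h3]; exact Finset.sup_mono h1))
      rw [hemp, Finset.sum_empty]
  · simp only [hi, if_false]
    set U := insert i T with hU
    have hiU : i ∈ U := Finset.mem_insert_self i T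
    have hcard : U.card = T.card + 1 := Finset.card_insert_of_notMem hi
    have hsubU : ∀ S : Finset α, (T ⊆ S ∧ (i ∈ S ∧ p i = S.sup p)) ↔
        (U ⊆ S ∧ p i = S.sup p) := by
      intro S
      rw [hU, Finset.insert_subset_iff]
      tauto
    by_cases hpi : p i = U.sup p
    · unfold gammaCoeff
      rw [if_pos ⟨hiU, hpi⟩]
      have hfil : Finset.univ.powerset.filter (fun S => T ⊆ S ∧ (i ∈ S ∧ p i = S.sup p))
          = Finset.univ.powerset.filter (fun S => U ⊆ S ∧ S.sup p = U.sup p) := by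
        apply Finset.filter_congr
        intro S _
        rw [hsubU S]
        constructor
        · rintro ⟨h1, h2⟩
          refine ⟨h1, le_antisymm ?_ (Finset.sup_mono h1)⟩
          rw [← h2, hpi]
        · rintro ⟨h1, h2⟩
          exact ⟨h1, by rw [hpi, ← h2]⟩
      rw [hfil, ← Finset.sum_neg_distrib]
      refine Finset.sum_congr rfl fun S hS => ?_
      simp only [Finset.mem_filter] at hS
      have hle : U.card ≤ S.card := Finset.card_le_card hS.2.1
      have hexp : S.card - T.card = (S.card - U.card) + 1 := by omega
      rw [hexp, pow_succ]
      ring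
    · unfold gammaCoeff
      rw [if_neg (by tauto), neg_zero]
      have hemp : Finset.univ.powerset.filter
          (fun S => T ⊆ S ∧ (i ∈ S ∧ p i = S.sup p)) = ∅ := by
        apply Finset.filter_false_of_mem
        intro S _ hS
        obtain ⟨h1, h2⟩ := (hsubU S).mp hS
        exact hpi (le_antisymm (Finset.le_sup hiU)
          (by rw [h2]; exact Finset.sup_mono h1))
      rw [hemp, Finset.sum_empty]

/-- The `(ω,Σ)`-weighted Shapley value in terms of marginal contributions:
`Φ^ω_i(v) = ∑_{S ⊆ N, i ∈ S} γ^{N,ω}_{S,i} (v(S) − v(S∖{i}))`. -/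
theorem weighted_shapley_eq_sum_gamma_marginals [Fintype α] [DecidableEq α]
    (ω : α → ℝ) (hω : ∀ i, 0 < ω i) (p : α → ℕ) (hp : ∀ i, 1 ≤ p i)
    (v : Finset α → ℝ) (hv : v ∅ = 0) (i : α) :
    wShapley ω p v Finset.univ i =
      ∑ S ∈ Finset.univ.powerset.filter (fun S => i ∈ S),
        gammaCoeff ω p S i * (v S - v (S.erase i)) := by
  classical
  have hpow : ∀ S : Finset α, S.powerset
      = Finset.univ.powerset.filter (fun T => T ⊆ S) := by
    intro S; ext T; simp
  have lhs : wShapley ω p v Finset.univ i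
      = ∑ T ∈ Finset.univ.powerset,
          (∑ S ∈ Finset.univ.powerset.filter (fun S => T ⊆ S),
            (-1 : ℝ) ^ (S.card - T.card) * (wbar ω p S i / wbarSum ω p S)) * v T := by
    unfold wShapley unanimityCoeff
    calc ∑ S ∈ Finset.univ.powerset, wbar ω p S i / wbarSum ω p S *
            ∑ T ∈ S.powerset, (-1 : ℝ) ^ (S.card - T.card) * v T
        = ∑ S ∈ Finset.univ.powerset, ∑ T ∈ Finset.univ.powerset,
            (if T ⊆ S then (wbar ω p S i / wbarSum ω p S) *
              ((-1 : ℝ) ^ (S.card - T.card) * v T) else 0) := by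
          refine Finset.sum_congr rfl fun S _ => ?_
          rw [hpow S, Finset.sum_filter, Finset.mul_sum]
          refine Finset.sum_congr rfl fun T _ => ?_
          split <;> simp
      _ = ∑ T ∈ Finset.univ.powerset, ∑ S ∈ Finset.univ.powerset,
            (if T ⊆ S then (wbar ω p S i / wbarSum ω p S) *
              ((-1 : ℝ) ^ (S.card - T.card) * v T) else 0) := Finset.sum_comm
      _ = ∑ T ∈ Finset.univ.powerset,
          (∑ S ∈ Finset.univ.powerset.filter (fun S => T ⊆ S),
            (-1 : ℝ) ^ (S.card - T.card) * (wbar ω p S i / wbarSum ω p S)) * v T := by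
          refine Finset.sum_congr rfl fun T _ => ?_
          rw [Finset.sum_mul, Finset.sum_filter]
          refine Finset.sum_congr rfl fun S _ => ?_
          split
          · ring
          · simp
  have reindex : ∑ S ∈ Finset.univ.powerset.filter (fun S => i ∈ S),
        gammaCoeff ω p S i * v (S.erase i)
      = ∑ T ∈ Finset.univ.powerset.filter (fun T => i ∉ T),
        gammaCoeff ω p (insert i T) i * v T := by
    refine Finset.sum_nbij' (fun S => S.erase i) (fun T => insert i T) ?_ ?_ ?_ ?_ ?_
    · intro S hS
      simp only [Finset.mem_filter, Finset.mem_powerset] at hS ⊢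
      exact ⟨Finset.subset_univ _, Finset.notMem_erase i S⟩
    · intro T hT
      simp only [Finset.mem_filter, Finset.mem_powerset] at hT ⊢
      exact ⟨Finset.subset_univ _, Finset.mem_insert_self i T⟩
    · intro S hS
      simp only [Finset.mem_filter] at hS
      exact Finset.insert_erase hS.2
    · intro T hT
      simp only [Finset.mem_filter] at hT
      exact Finset.erase_insert hT.2
    · intro S hS
      simp only [Finset.mem_filter] at hS
      rw [Finset.insert_erase hS.2]
  have rhs : (∑ S ∈ Finset.univ.powerset.filter (fun S => i ∈ S),
        gammaCoeff ω p S i * (v S - v (S.erase i)))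
      = ∑ T ∈ Finset.univ.powerset,
        (if i ∈ T then gammaCoeff ω p T i else - gammaCoeff ω p (insert i T) i) * v T := by
    rw [← Finset.sum_filter_add_sum_filter_not Finset.univ.powerset (fun T => i ∈ T)
      (fun T => (if i ∈ T then gammaCoeff ω p T i else - gammaCoeff ω p (insert i T) i) * v T)]
    have e1 : ∑ T ∈ Finset.univ.powerset.filter (fun T => i ∈ T),
        (if i ∈ T then gammaCoeff ω p T i else - gammaCoeff ω p (insert i T) i) * v T
        = ∑ T ∈ Finset.univ.powerset.filter (fun T => i ∈ T), gammaCoeff ω p T i * v T := by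
      refine Finset.sum_congr rfl fun T hT => ?_
      simp only [Finset.mem_filter] at hT
      rw [if_pos hT.2]
    have e2 : ∑ T ∈ Finset.univ.powerset.filter (fun T => ¬ i ∈ T),
        (if i ∈ T then gammaCoeff ω p T i else - gammaCoeff ω p (insert i T) i) * v T
        = - ∑ T ∈ Finset.univ.powerset.filter (fun T => ¬ i ∈ T),
            gammaCoeff ω p (insert i T) i * v T := by
      rw [← Finset.sum_neg_distrib]
      refine Finset.sum_congr rfl fun T hT => ?_
      simp only [Finset.mem_filter] at hT
      rw [if_neg hT.2]
      ring
    rw [e1, e2, ← reindex, ← sub_eq_add_neg, ← Finset.sum_sub_distrib]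
    refine (Finset.sum_congr rfl fun S _ => ?_).symm
    ring
  rw [lhs, rhs]
  exact Finset.sum_congr rfl fun T _ => by rw [coeff_eq]

end
end
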